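/- Let μ be a pairwise-independent ensemble with M' ≥ 2 codewords and marginal Q, and let ρ ≥ 1. Then for every message index m, the fractional moment of the maximum-likelihood error probability satisfies E_μ[ P_{e,m}(C)^{1/ρ} ] ≤ (M' − 1) · ∑_{x,x'∈𝒳^n} Q(x)Q(x')·Z(x,x')^{1/ρ}. -/

import Mathlib

open scoped Classical

/-- `W` is a channel: nonnegative, and each row sums to one. -/
def IsChannel {𝒳 𝒴 : Type*} [Fintype 𝒴] (W : 𝒳 → 𝒴 → ℝ) : Prop :=
  (∀ x y, 0 ≤ W x y) ∧ ∀ x, ∑ y, W x y = 1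

/-- Maximum-likelihood error probability of message `m` under code `c`
(ties counted as errors). -/
noncomputable def Pem {𝒳 𝒴 : Type*} [Fintype 𝒴] {M : ℕ}
    (W : 𝒳 → 𝒴 → ℝ) (c : Fin M → 𝒳) (m : Fin M) : ℝ :=
  ∑ y, W (c m) y * (if ∃ k, k ≠ m ∧ W (c m) y ≤ W (c k) y then (1:ℝ) else 0)

/-- Bhattacharyya coefficient between inputs `x` and `x'`. -/
noncomputable def Bhat {𝒳 𝒴 : Type*} [Fintype 𝒴] (W : 𝒳 → 𝒴 → ℝ) (x x' : 𝒳) : ℝ :=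
  ∑ y, Real.sqrt (W x y * W x' y)

/-- `p` is a probability mass function on a finite type. -/
def IsPMF {α : Type*} [Fintype α] (p : α → ℝ) : Prop :=
  (∀ a, 0 ≤ p a) ∧ ∑ a, p a = 1

/-- Probability of the event `S` under the pmf `μ`. -/
noncomputable def pmfProb {α : Type*} [Fintype α] (μ : α → ℝ) (S : α → Prop) : ℝ :=
  ∑ a, if S a then μ a else 0

/-- Expectation of `f` under the pmf `μ`. -/
noncomputable def pmfExp {α : Type*} [Fintype α] (μ : α → ℝ) (f : α → ℝ) : ℝ :=
  ∑ a, μ a * f a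

/-- `μ` is a pairwise-independent ensemble of `M` codewords with marginal `Q`:
each codeword has law `Q` and each pair of distinct codewords has law `Q × Q`. -/
def PairwiseIndepEnsemble {𝒳 : Type*} [Fintype 𝒳] {M : ℕ}
    (μ : (Fin M → 𝒳) → ℝ) (Q : 𝒳 → ℝ) : Prop :=
  IsPMF μ ∧ IsPMF Q ∧
  (∀ (m : Fin M) (x : 𝒳), pmfProb μ (fun c => c m = x) = Q x) ∧
  (∀ (m k : Fin M), m ≠ k → ∀ (x x' : 𝒳),
    pmfProb μ (fun c => c m = x ∧ c k = x') = Q x * Q x')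

/-!
On the ML error event for message `m` some `k ≠ m` has `W(y|x_m) ≤ W(y|x_k)`, and then
`W(y|x_m) ≤ √(W(y|x_m) W(y|x_k))`; summing over `y` gives the union–Bhattacharyya bound
`P_{e,m}(c) ≤ ∑_{k ≠ m} Z(x_m, x_k)`. For `ρ ≥ 1` the map `t ↦ t^{1/ρ}` is subadditive on
`[0, ∞)`, so the same bound holds termwise for the `1/ρ`-th powers. Taking expectations, each of
the `M' - 1` terms depends only on the pair `(X_m, X_k)`, whose law is `Q × Q`.
-/

open Finset

theorem rpow_sum_le_sum_rpow {ι : Type*} (s : Finset ι) {f : ι → ℝ} (hf : ∀ i ∈ s, 0 ≤ f i)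
    {p : ℝ} (hp0 : 0 < p) (hp1 : p ≤ 1) :
    (∑ i ∈ s, f i) ^ p ≤ ∑ i ∈ s, f i ^ p :=
  le_sum_of_subadditive_on_pred (· ^ p) (0 ≤ ·) (by simp [Real.zero_rpow hp0.ne'])
    (fun _ _ ha hb => Real.rpow_add_le_add_rpow ha hb hp0.le hp1) (fun _ _ => add_nonneg) f hf

section Channel

variable {𝒳 𝒴 : Type*} [Fintype 𝒴] {W : 𝒳 → 𝒴 → ℝ}

theorem Bhat_nonneg (x x' : 𝒳) : 0 ≤ Bhat W x x' :=
  sum_nonneg fun _ _ => Real.sqrt_nonneg _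

theorem Pem_nonneg (hW : ∀ x y, 0 ≤ W x y) {M : ℕ} (c : Fin M → 𝒳) (m : Fin M) :
    0 ≤ Pem W c m :=
  sum_nonneg fun _ _ => mul_nonneg (hW _ _) (by positivity)

theorem Pem_le_sum_Bhat (hW : ∀ x y, 0 ≤ W x y) {M : ℕ} (c : Fin M → 𝒳) (m : Fin M) :
    Pem W c m ≤ ∑ k ∈ univ.erase m, Bhat W (c m) (c k) := by
  unfold Pem Bhat
  rw [sum_comm]
  refine sum_le_sum fun y _ => ?_
  split_ifs with h
  · obtain ⟨k, hkm, hle⟩ := h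
    calc W (c m) y * 1 = √(W (c m) y * W (c m) y) := by
          rw [mul_one, Real.sqrt_mul_self (hW _ _)]
      _ ≤ √(W (c m) y * W (c k) y) := by gcongr; exact hW _ _
      _ ≤ ∑ k ∈ univ.erase m, √(W (c m) y * W (c k) y) :=
          single_le_sum (f := fun k => √(W (c m) y * W (c k) y))
            (fun _ _ => Real.sqrt_nonneg _) (mem_erase.2 ⟨hkm, mem_univ k⟩)
  · rw [mul_zero]
    exact sum_nonneg fun _ _ => Real.sqrt_nonneg _

theorem Pem_rpow_le_sum_Bhat_rpow (hW : ∀ x y, 0 ≤ W x y) {M : ℕ} (c : Fin M → 𝒳) (m : Fin M)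
    {p : ℝ} (hp0 : 0 < p) (hp1 : p ≤ 1) :
    Pem W c m ^ p ≤ ∑ k ∈ univ.erase m, Bhat W (c m) (c k) ^ p :=
  calc Pem W c m ^ p ≤ (∑ k ∈ univ.erase m, Bhat W (c m) (c k)) ^ p :=
        Real.rpow_le_rpow (Pem_nonneg hW c m) (Pem_le_sum_Bhat hW c m) hp0.le
    _ ≤ ∑ k ∈ univ.erase m, Bhat W (c m) (c k) ^ p :=
        rpow_sum_le_sum_rpow _ (fun _ _ => Bhat_nonneg _ _) hp0 hp1

end Channel

section Expectation

variable {α β : Type*} [Fintype α] {μ : α → ℝ}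

theorem pmfExp_mono (hμ : ∀ a, 0 ≤ μ a) {f g : α → ℝ} (hfg : ∀ a, f a ≤ g a) :
    pmfExp μ f ≤ pmfExp μ g :=
  sum_le_sum fun a _ => mul_le_mul_of_nonneg_left (hfg a) (hμ a)

theorem pmfExp_sum {ι : Type*} (s : Finset ι) (f : ι → α → ℝ) :
    pmfExp μ (fun a => ∑ i ∈ s, f i a) = ∑ i ∈ s, pmfExp μ (f i) := by
  simp only [pmfExp, mul_sum]
  exact sum_comm

theorem pmfExp_comp_pair [Fintype β] (X Y : α → β) (g : β → β → ℝ) :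
    pmfExp μ (fun a => g (X a) (Y a)) =
      ∑ x, ∑ x', pmfProb μ (fun a => X a = x ∧ Y a = x') * g x x' := by
  have hsplit : ∀ a, μ a * g (X a) (Y a) =
      ∑ x, ∑ x', if X a = x ∧ Y a = x' then μ a * g x x' else 0 := fun a => by
    simp only [ite_and, sum_ite_irrel, sum_ite_eq, mem_univ, ↓reduceIte, sum_const_zero]
  simp only [pmfExp, pmfProb, hsplit, sum_mul, ite_mul, zero_mul]
  exact sum_comm.trans (sum_congr rfl fun _ _ => sum_comm)

end Expectation

theorem PairwiseIndepEnsemble.pmfExp_pair {𝒳 : Type*} [Fintype 𝒳] {M : ℕ}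
    {μ : (Fin M → 𝒳) → ℝ} {Q : 𝒳 → ℝ} (hμ : PairwiseIndepEnsemble μ Q) {m k : Fin M}
    (hmk : m ≠ k) (g : 𝒳 → 𝒳 → ℝ) :
    pmfExp μ (fun c => g (c m) (c k)) = ∑ x, ∑ x', Q x * Q x' * g x x' := by
  simp only [pmfExp_comp_pair (μ := μ) (fun c => c m) (fun c => c k), hμ.2.2.2 m k hmk]

theorem fractional_moment_bound_general
    {𝒳 𝒴 : Type*} [Fintype 𝒳] [Fintype 𝒴]
    (n : ℕ)
    (W : (Fin n → 𝒳) → (Fin n → 𝒴) → ℝ) (hW : IsChannel W)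
    (Q : (Fin n → 𝒳) → ℝ) (M' : ℕ)
    (μ : (Fin M' → (Fin n → 𝒳)) → ℝ) (hμ : PairwiseIndepEnsemble μ Q)
    (ρ : ℝ) (hρ : 1 ≤ ρ) (m : Fin M') :
    pmfExp μ (fun c => Pem W c m ^ (1/ρ)) ≤
      ((M' : ℝ) - 1) * ∑ x, ∑ x', Q x * Q x' * Bhat W x x' ^ (1/ρ) := by
  have hρ0 : 0 < 1 / ρ := by positivity
  have hρ1 : 1 / ρ ≤ 1 := by rwa [div_le_one (by linarith)]
  calc pmfExp μ (fun c => Pem W c m ^ (1/ρ))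
      ≤ pmfExp μ (fun c => ∑ k ∈ univ.erase m, Bhat W (c m) (c k) ^ (1/ρ)) :=
        pmfExp_mono hμ.1.1 fun c => Pem_rpow_le_sum_Bhat_rpow hW.1 c m hρ0 hρ1
    _ = ∑ k ∈ univ.erase m, pmfExp μ (fun c => Bhat W (c m) (c k) ^ (1/ρ)) := pmfExp_sum _ _
    _ = ∑ k ∈ univ.erase m, ∑ x, ∑ x', Q x * Q x' * Bhat W x x' ^ (1/ρ) :=
        sum_congr rfl fun k hk =>
          hμ.pmfExp_pair (ne_of_mem_erase hk).symm fun x x' => Bhat W x x' ^ (1/ρ)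
    _ = ((M' : ℝ) - 1) * ∑ x, ∑ x', Q x * Q x' * Bhat W x x' ^ (1/ρ) := by
        rw [sum_const, card_erase_of_mem (mem_univ m), card_univ, Fintype.card_fin,
          nsmul_eq_mul, Nat.cast_pred m.pos]

/-- bound on the fractional moment of the ML error probability
for a pairwise-independent ensemble. -/
theorem fractional_moment_bound
    {𝒳 𝒴 : Type*} [Fintype 𝒳] [Fintype 𝒴] [Nonempty 𝒳] [Nonempty 𝒴]
    (n : ℕ) (hn : 1 ≤ n)
    (W : (Fin n → 𝒳) → (Fin n → 𝒴) → ℝ) (hW : IsChannel W)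
    (Q : (Fin n → 𝒳) → ℝ) (M' : ℕ) (hM' : 2 ≤ M')
    (μ : (Fin M' → (Fin n → 𝒳)) → ℝ) (hμ : PairwiseIndepEnsemble μ Q)
    (ρ : ℝ) (hρ : 1 ≤ ρ) (m : Fin M') :
    pmfExp μ (fun c => Pem W c m ^ (1/ρ)) ≤
      ((M' : ℝ) - 1) * ∑ x, ∑ x', Q x * Q x' * Bhat W x x' ^ (1/ρ) :=
  fractional_moment_bound_general n W hW Q M' μ hμ ρ hρ m
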